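/- arXiv:1412.3976 — 6 statements merged into one kernel-verified Lean document; each statement's English description precedes it below -/
import Mathlib

section
/- Let G be a simple graph and C, C' cliques of G with |C| = |C'| = k such that there exists a TAR(k)-sequence from C to C'. Then there exists a shortest TAR(k)-sequence C_0 = C, C_1, ..., C_ℓ = C' such that |C_{2i-1}| = k+1 and |C_{2i}| = k for every i with 1 ≤ i ≤ ℓ/2 (in particular ℓ is even and every clique in the sequence has size k or k+1). -/
/-!
Among the shortest TAR(k)-sequences from `C` to `C'` choose one of least total size. Sizes change
by one at each step, so they alternate in parity starting from `k`; it remains to see that no clique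
has size `k + 2` or more. At a clique of maximal size `≥ k + 2` the sequence inserts some `u` and then
erases some `v`. If `u = v` the detour can be cut out, giving a shorter sequence; otherwise erasing
`v` before inserting `u` keeps the length, stays above `k`, and lowers the total size by two.
-/

variable {V : Type*} [DecidableEq V]

/-- One TAR step: add or remove a single vertex. -/
def TARStep (C C' : Finset V) : Prop :=
  (∃ v ∉ C, C' = insert v C) ∨ (∃ v ∈ C, C' = C.erase v)

/-- A TAR(k)-sequence of cliques of `G` of length `ℓ`, given by `f` on indices `0..ℓ`. -/
def TARSeq (G : SimpleGraph V) (k ℓ : ℕ) (f : ℕ → Finset V) : Prop :=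
  (∀ i ≤ ℓ, G.IsClique (f i : Set V) ∧ k ≤ (f i).card) ∧
  ∀ i < ℓ, TARStep (f i) (f (i + 1))

namespace TARStep

variable {A B D : Finset V}

lemma card_eq (h : TARStep A B) : B.card = A.card + 1 ∨ A.card = B.card + 1 := by
  rcases h with ⟨v, hv, rfl⟩ | ⟨v, hv, rfl⟩
  · exact Or.inl (Finset.card_insert_of_notMem hv)
  · exact Or.inr (Finset.card_erase_add_one hv).symm

lemma erase {v : V} (hv : v ∈ A) : TARStep A (A.erase v) := Or.inr ⟨v, hv, rfl⟩

/-- An insertion followed by an erasure either returns to the start or can be done in the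
opposite order. -/
lemma peak (hAB : TARStep A B) (hBD : TARStep B D) (hA : A.card < B.card)
    (hD : D.card < B.card) :
    D = A ∨ ∃ v ∈ A, TARStep (A.erase v) D := by
  obtain ⟨u, hu, rfl⟩ : ∃ u ∉ A, B = insert u A := by
    rcases hAB with h | ⟨v, hv, rfl⟩
    · exact h
    · exact absurd hA (Finset.card_erase_le).not_gt
  obtain ⟨v, hv, rfl⟩ : ∃ v ∈ insert u A, D = (insert u A).erase v := by
    rcases hBD with ⟨v, hv, rfl⟩ | h
    · exact absurd hD (Finset.card_le_card (Finset.subset_insert _ _)).not_gt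
    · exact h
  by_cases huv : u = v
  · subst huv
    exact Or.inl (Finset.erase_insert hu)
  · have hvA : v ∈ A := (Finset.mem_insert.mp hv).resolve_left (Ne.symm huv)
    refine Or.inr ⟨v, hvA, Or.inl ⟨u, fun h => hu (Finset.mem_of_mem_erase h), ?_⟩⟩
    exact Finset.erase_insert_of_ne huv

end TARStep

def IsTARPath (G : SimpleGraph V) (k : ℕ) (C C' : Finset V) (ℓ : ℕ) (f : ℕ → Finset V) : Prop :=
  TARSeq G k ℓ f ∧ f 0 = C ∧ f ℓ = C'

def tarWeight (ℓ : ℕ) (f : ℕ → Finset V) : ℕ :=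
  ∑ i ∈ Finset.range (ℓ + 1), (f i).card

namespace TARSeq

variable {G : SimpleGraph V} {k ℓ : ℕ} {f : ℕ → Finset V}

lemma card_mod_two (hf : TARSeq G k ℓ f) {i : ℕ} (hi : i ≤ ℓ) :
    (f i).card % 2 = ((f 0).card + i) % 2 := by
  induction i with
  | zero => rfl
  | succ n ih =>
    have := ih (by omega)
    rcases (hf.2 n (by omega)).card_eq with h | h <;> omega

lemma card_succ_lt_of_le (hf : TARSeq G k ℓ f) {i : ℕ} (hi : i < ℓ)
    (hle : (f i).card ≤ (f (i + 1)).card) : (f i).card < (f (i + 1)).card := by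
  rcases (hf.2 i hi).card_eq with h | h <;> omega

lemma card_lt_of_succ_le (hf : TARSeq G k ℓ f) {i : ℕ} (hi : i < ℓ)
    (hle : (f (i + 1)).card ≤ (f i).card) : (f (i + 1)).card < (f i).card := by
  rcases (hf.2 i hi).card_eq with h | h <;> omega

lemma skip_detour (hf : TARSeq G k ℓ f) {j : ℕ} (hj : j + 2 ≤ ℓ) (hret : f (j + 2) = f j) :
    TARSeq G k (ℓ - 2) (fun i => f (if i ≤ j then i else i + 2)) := by
  refine ⟨fun i hi => hf.1 _ (by split_ifs <;> omega), fun i hi => ?_⟩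
  by_cases hij : i + 1 ≤ j
  · simpa [hij, show i ≤ j by omega] using hf.2 i (by omega)
  · by_cases hje : i = j
    · subst hje
      simpa [← hret] using hf.2 (i + 2) (by omega)
    · simpa [hij, show ¬i ≤ j by omega, add_right_comm] using hf.2 (i + 2) (by omega)

lemma update (hf : TARSeq G k ℓ f) {j : ℕ} (hj : j + 2 ≤ ℓ) {B : Finset V}
    (hB : G.IsClique (B : Set V)) (hBk : k ≤ B.card) (h₁ : TARStep (f j) B)
    (h₂ : TARStep B (f (j + 2))) :
    TARSeq G k ℓ (Function.update f (j + 1) B) := by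
  refine ⟨fun i hi => ?_, fun i hi => ?_⟩
  · rcases eq_or_ne i (j + 1) with rfl | hne
    · simpa using ⟨hB, hBk⟩
    · simpa [hne] using hf.1 i hi
  · rcases lt_trichotomy i j with hlt | rfl | hgt
    · rw [Function.update_of_ne (by omega), Function.update_of_ne (by omega)]
      exact hf.2 i hi
    · simpa using h₁
    · rcases eq_or_ne i (j + 1) with rfl | hne
      · simpa using h₂
      · rw [Function.update_of_ne hne, Function.update_of_ne (by omega)]
        exact hf.2 i hi

end TARSeq

omit [DecidableEq V] in
lemma tarWeight_update_lt {ℓ j : ℕ} (hj : j ≤ ℓ) (f : ℕ → Finset V) {B : Finset V}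
    (hB : B.card < (f j).card) : tarWeight ℓ (Function.update f j B) < tarWeight ℓ f := by
  refine Finset.sum_lt_sum (fun i _ => ?_) ⟨j, Finset.mem_range.mpr (by omega), by simpa using hB⟩
  rcases eq_or_ne i j with rfl | hne
  · simpa using hB.le
  · simp [hne]

namespace IsTARPath

variable {G : SimpleGraph V} {k : ℕ} {C C' : Finset V} {ℓ : ℕ} {f : ℕ → Finset V}

lemma shorten_or_lighten (hf : IsTARPath G k C C' ℓ f) {j : ℕ} (hj : j + 2 ≤ ℓ)
    (h₁ : (f j).card < (f (j + 1)).card) (h₂ : (f (j + 2)).card < (f (j + 1)).card)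
    (hk : k + 2 ≤ (f (j + 1)).card) :
    (∃ g, IsTARPath G k C C' (ℓ - 2) g) ∨
      ∃ g, IsTARPath G k C C' ℓ g ∧ tarWeight ℓ g < tarWeight ℓ f := by
  obtain ⟨hseq, hf0, hfℓ⟩ := hf
  rcases (hseq.2 j (by omega)).peak (hseq.2 (j + 1) (by omega)) h₁ h₂ with hret | ⟨v, hv, hstep⟩
  · refine Or.inl ⟨_, hseq.skip_detour hj hret, by simpa using hf0, ?_⟩
    by_cases hℓ : ℓ - 2 ≤ j
    · obtain rfl : j = ℓ - 2 := by omega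
      have hℓ2 : f (ℓ - 2) = f ℓ := by rw [← hret]; congr 1; omega
      simpa [hℓ2] using hfℓ
    · simp [hℓ, show ℓ - 2 + 2 = ℓ by omega, hfℓ]
  · have hcard : (f j).card = (f (j + 1)).card - 1 := by
      rcases (hseq.2 j (by omega)).card_eq with h | h <;> omega
    have hBcard : ((f j).erase v).card + 1 = (f j).card := Finset.card_erase_add_one hv
    refine Or.inr ⟨_, ⟨hseq.update hj ((hseq.1 j (by omega)).1.subset (by simp))
      (by omega) (TARStep.erase hv) hstep, ?_, ?_⟩, tarWeight_update_lt (by omega) f (by omega)⟩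
    · simpa using hf0
    · simpa [show ℓ ≠ j + 1 by omega] using hfℓ

lemma card_le_of_shortest_of_lightest (hf : IsTARPath G k C C' ℓ f) (hC : C.card ≤ k + 1)
    (hC' : C'.card ≤ k + 1) (hshort : ∀ ℓ' g, IsTARPath G k C C' ℓ' g → ℓ ≤ ℓ')
    (hlight : ∀ g, IsTARPath G k C C' ℓ g → ¬tarWeight ℓ g < tarWeight ℓ f) {i : ℕ}
    (hi : i ≤ ℓ) : (f i).card ≤ k + 1 := by
  by_contra! hbig
  obtain ⟨m, hm, hmax⟩ := Finset.exists_max_image (Finset.range (ℓ + 1)) (fun i => (f i).card)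
    ⟨0, by simp⟩
  simp only [Finset.mem_range] at hm hmax
  have hmk : k + 2 ≤ (f m).card := (hmax i (by omega)).trans' hbig
  obtain ⟨j, rfl⟩ : ∃ j, m = j + 1 := Nat.exists_eq_add_one.mpr
    (Nat.pos_of_ne_zero (by rintro rfl; rw [hf.2.1] at hmk; omega))
  have hj : j + 2 ≤ ℓ := by
    by_contra
    obtain rfl : j + 1 = ℓ := by omega
    rw [hf.2.2] at hmk
    omega
  have h₁ := hf.1.card_succ_lt_of_le (i := j) (by omega) (hmax j (by omega))
  have h₂ := hf.1.card_lt_of_succ_le (i := j + 1) (by omega) (hmax (j + 2) (by omega))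
  rcases hf.shorten_or_lighten hj h₁ h₂ hmk with ⟨g, hg⟩ | ⟨g, hg, hlt⟩
  · have := hshort _ g hg
    omega
  · exact hlight g hg hlt

end IsTARPath

theorem stmt2 (G : SimpleGraph V) (C C' : Finset V) (k : ℕ)
    (hC : C.card = k) (hC' : C'.card = k)
    (hex : ∃ (ℓ : ℕ) (f : ℕ → Finset V), TARSeq G k ℓ f ∧ f 0 = C ∧ f ℓ = C') :
    ∃ (ℓ : ℕ) (f : ℕ → Finset V),
      TARSeq G k ℓ f ∧ f 0 = C ∧ f ℓ = C' ∧
      (∀ (ℓ' : ℕ) (g : ℕ → Finset V), TARSeq G k ℓ' g → g 0 = C → g ℓ' = C' → ℓ ≤ ℓ') ∧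
      Even ℓ ∧
      ∀ i, 1 ≤ i → 2 * i ≤ ℓ →
        (f (2 * i - 1)).card = k + 1 ∧ (f (2 * i)).card = k := by
  obtain ⟨ℓ, ⟨f₀, hf₀⟩, hshort⟩ :=
    wellFounded_lt.has_min {ℓ | ∃ f, IsTARPath G k C C' ℓ f} hex
  obtain ⟨f, hf, hlight⟩ :=
    (measure (tarWeight ℓ)).wf.has_min {f | IsTARPath G k C C' ℓ f} ⟨f₀, hf₀⟩
  have hshort' (ℓ' : ℕ) (g : ℕ → Finset V) (hg : IsTARPath G k C C' ℓ' g) : ℓ ≤ ℓ' :=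
    not_lt.mp (hshort ℓ' ⟨g, hg⟩)
  have hbound {i : ℕ} (hi : i ≤ ℓ) : (f i).card ≤ k + 1 :=
    hf.card_le_of_shortest_of_lightest (by omega) (by omega) hshort' hlight hi
  have hparity {i : ℕ} (hi : i ≤ ℓ) : (f i).card % 2 = (k + i) % 2 := by
    rw [hf.1.card_mod_two hi, hf.2.1, hC]
  have heven : Even ℓ := by
    have := hparity le_rfl
    rw [hf.2.2, hC'] at this
    exact Nat.even_iff.mpr (by omega)
  refine ⟨ℓ, f, hf.1, hf.2.1, hf.2.2, fun ℓ' g hg h0 hℓ' => hshort' ℓ' g ⟨hg, h0, hℓ'⟩, heven,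
    fun i hi hiℓ => ?_⟩
  have := hparity (i := 2 * i - 1) (by omega)
  have := hparity (i := 2 * i) hiℓ
  have := hbound (i := 2 * i - 1) (by omega)
  have := hbound (i := 2 * i) hiℓ
  have := (hf.1.1 (2 * i - 1) (by omega)).2
  have := (hf.1.1 (2 * i) hiℓ).2
  omega
end

section
/- Let G be a simple graph and C, C' cliques of G with |C| = |C'| = k. If there exists a TS-sequence from C to C' of length ℓ, then there exists a TAR(k)-sequence from C to C' of length 2ℓ. -/
/-
Replace each token slide `C ⟶ insert w (C.erase v)` by the two TAR moves
`C ⟶ insert w C ⟶ insert w (C.erase v)`. The intermediate set `insert w C` is `C ∪ C'`; it is a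
clique because `w` is adjacent to `v` along the slide and to every other vertex of `C` inside the
clique `C'`, and it has one vertex more than `C`, so the threshold `k` is never violated.
-/

variable {V : Type*} [DecidableEq V]

/-- One TS step: slide a token along an edge. -/
def TSStep (G : SimpleGraph V) (C C' : Finset V) : Prop :=
  ∃ v ∈ C, ∃ w, w ∉ C ∧ G.Adj v w ∧ C' = insert w (C.erase v)

/-- A TS-sequence of cliques of `G` of length `ℓ`. -/
def TSSeq (G : SimpleGraph V) (ℓ : ℕ) (f : ℕ → Finset V) : Prop :=
  (∀ i ≤ ℓ, G.IsClique (f i : Set V)) ∧ ∀ i < ℓ, TSStep G (f i) (f (i + 1))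

theorem Finset.union_insert_erase (s : Finset V) (v w : V) :
    s ∪ insert w (s.erase v) = insert w s := by
  rw [Finset.union_insert, Finset.union_eq_left.mpr (Finset.erase_subset v s)]

namespace TSStep

variable {G : SimpleGraph V} {C C' : Finset V}

theorem card_eq (h : TSStep G C C') : C'.card = C.card := by
  obtain ⟨v, hv, w, hw, -, rfl⟩ := h
  rw [Finset.card_insert_of_notMem (fun h => hw (Finset.mem_of_mem_erase h)),
    Finset.card_erase_add_one hv]

theorem tarStep_union_left (h : TSStep G C C') : TARStep C (C ∪ C') := by
  obtain ⟨v, hv, w, hw, -, rfl⟩ := h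
  exact Or.inl ⟨w, hw, Finset.union_insert_erase C v w⟩

theorem tarStep_union_right (h : TSStep G C C') : TARStep (C ∪ C') C' := by
  obtain ⟨v, hv, w, hw, -, rfl⟩ := h
  have hvw : v ≠ w := fun h => hw (h ▸ hv)
  refine Or.inr ⟨v, Finset.mem_union_left _ hv, ?_⟩
  rw [Finset.union_insert_erase C v w, Finset.erase_insert_of_ne hvw.symm]

theorem isClique_union (h : TSStep G C C') (hC : G.IsClique (C : Set V))
    (hC' : G.IsClique (C' : Set V)) : G.IsClique ((C ∪ C' : Finset V) : Set V) := by
  obtain ⟨v, hv, w, hw, hadj, rfl⟩ := h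
  rw [Finset.union_insert_erase C v w, Finset.coe_insert]
  refine hC.insert fun b hb hwb => ?_
  by_cases hbv : b = v
  · exact hbv ▸ hadj.symm
  · exact hC' (by simp) (by simp [hbv, hb]) hwb

end TSStep

theorem TSSeq.card_eq {G : SimpleGraph V} {ℓ : ℕ} {f : ℕ → Finset V} (hf : TSSeq G ℓ f) :
    ∀ i ≤ ℓ, (f i).card = (f 0).card
  | 0, _ => rfl
  | i + 1, hi => ((hf.2 i hi).card_eq).trans (hf.card_eq i (by omega))

def interleaveUnion (f : ℕ → Finset V) (i : ℕ) : Finset V :=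
  if i % 2 = 0 then f (i / 2) else f (i / 2) ∪ f (i / 2 + 1)

@[simp]
theorem interleaveUnion_two_mul (f : ℕ → Finset V) (j : ℕ) :
    interleaveUnion f (2 * j) = f j := by
  simp [interleaveUnion]

@[simp]
theorem interleaveUnion_two_mul_add_one (f : ℕ → Finset V) (j : ℕ) :
    interleaveUnion f (2 * j + 1) = f j ∪ f (j + 1) := by
  have hj : (2 * j + 1) / 2 = j := by omega
  simp [interleaveUnion, hj, Nat.add_mod]

theorem TSSeq.tarSeq_interleaveUnion {G : SimpleGraph V} {ℓ : ℕ} {f : ℕ → Finset V}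
    (hf : TSSeq G ℓ f) : TARSeq G (f 0).card (2 * ℓ) (interleaveUnion f) := by
  refine ⟨fun i hi => ?_, fun i hi => ?_⟩ <;> obtain ⟨j, rfl | rfl⟩ := Nat.even_or_odd' i
  · simpa using ⟨hf.1 j (by omega), (hf.card_eq j (by omega)).ge⟩
  · have hstep := hf.2 j (by omega)
    simp only [interleaveUnion_two_mul_add_one]
    refine ⟨hstep.isClique_union (hf.1 j (by omega)) (hf.1 (j + 1) (by omega)), ?_⟩
    exact (hf.card_eq j (by omega)).ge.trans (Finset.card_le_card Finset.subset_union_left)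
  · simpa using (hf.2 j (by omega)).tarStep_union_left
  · rw [show 2 * j + 1 + 1 = 2 * (j + 1) by ring]
    simpa using (hf.2 j (by omega)).tarStep_union_right

theorem stmt3_general (G : SimpleGraph V) (C C' : Finset V) (k ℓ : ℕ)
    (hC : C.card = k)
    (f : ℕ → Finset V) (hf : TSSeq G ℓ f) (h0 : f 0 = C) (hl : f ℓ = C') :
    ∃ g : ℕ → Finset V, TARSeq G k (2 * ℓ) g ∧ g 0 = C ∧ g (2 * ℓ) = C' := by
  subst hC h0 hl
  exact ⟨interleaveUnion f, hf.tarSeq_interleaveUnion, by simpa using interleaveUnion_two_mul f 0,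
    interleaveUnion_two_mul f ℓ⟩

theorem stmt3 (G : SimpleGraph V) (C C' : Finset V) (k ℓ : ℕ)
    (hC : C.card = k) (hC' : C'.card = k)
    (f : ℕ → Finset V) (hf : TSSeq G ℓ f) (h0 : f 0 = C) (hl : f ℓ = C') :
    ∃ g : ℕ → Finset V, TARSeq G k (2 * ℓ) g ∧ g 0 = C ∧ g (2 * ℓ) = C' :=
  stmt3_general G C C' k ℓ hC f hf h0 hl
end

section
/- Let G be a simple graph and C, C' cliques of G with |C| = |C'| = k. There exists a TJ-sequence from C to C' if and only if there exists a TAR(k−1)-sequence from C to C'. Moreover the minimum length of a TJ-sequence from C to C' equals half the minimum length of a TAR(k−1)-sequence from C to C'. -/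
variable {V : Type*} [DecidableEq V]

/-- One TJ step: remove a vertex and add another (no adjacency required). -/
def TJStep (C C' : Finset V) : Prop :=
  ∃ v ∈ C, ∃ w, w ∉ C ∧ C' = insert w (C.erase v)

/-- A TJ-sequence of cliques of `G` of length `ℓ`. -/
def TJSeq (G : SimpleGraph V) (ℓ : ℕ) (f : ℕ → Finset V) : Prop :=
  (∀ i ≤ ℓ, G.IsClique (f i : Set V)) ∧ ∀ i < ℓ, TJStep (f i) (f (i + 1))

/-!
A TJ step is a removal followed by an addition, which turns a TJ-sequence of length `ℓ` into a
TAR(k-1)-sequence of length `2ℓ`. Conversely, walk along a TAR(k-1)-sequence while keeping a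
`k`-clique `S` that contains the current clique `F` or is contained in it. `S` only has to jump
when `F` drops to `k - 1` vertices and then gains a vertex outside `S`, or when `F` loses a
vertex of `S` while `#F > k`. Each jump is paid for by two TAR steps, which gives a TJ-sequence
of at most half the length.
-/

def TJReach (G : SimpleGraph V) (C C' : Finset V) (ℓ : ℕ) : Prop :=
  ∃ f : ℕ → Finset V, TJSeq G ℓ f ∧ f 0 = C ∧ f ℓ = C'

def TARReach (G : SimpleGraph V) (k : ℕ) (C C' : Finset V) (ℓ : ℕ) : Prop :=
  ∃ f : ℕ → Finset V, TARSeq G k ℓ f ∧ f 0 = C ∧ f ℓ = C'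

namespace TJStep

variable {C C' : Finset V}

theorem exists_inter_eq_erase (h : TJStep C C') : ∃ v ∈ C, C ∩ C' = C.erase v := by
  obtain ⟨v, hv, w, hw, rfl⟩ := h
  refine ⟨v, hv, ?_⟩
  rw [Finset.inter_insert_of_notMem hw, Finset.inter_eq_right.mpr (C.erase_subset v)]

theorem card_eq (h : TJStep C C') : C'.card = C.card := by
  obtain ⟨v, hv, w, hw, rfl⟩ := h
  rw [Finset.card_insert_of_notMem (fun hw' => hw (Finset.mem_of_mem_erase hw')),
    Finset.card_erase_add_one hv]

theorem card_inter (h : TJStep C C') : (C ∩ C').card = C.card - 1 := by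
  obtain ⟨v, hv, he⟩ := h.exists_inter_eq_erase
  rw [he, Finset.card_erase_of_mem hv]

theorem tarStep_inter_left (h : TJStep C C') : TARStep C (C ∩ C') :=
  let ⟨v, hv, he⟩ := h.exists_inter_eq_erase
  Or.inr ⟨v, hv, he⟩

theorem tarStep_inter_right (h : TJStep C C') : TARStep (C ∩ C') C' := by
  obtain ⟨v, -, w, hw, rfl⟩ := h
  refine Or.inl ⟨w, fun hw' => hw (Finset.mem_of_mem_inter_left hw'), ?_⟩
  rw [Finset.inter_insert_of_notMem hw, Finset.inter_eq_right.mpr (C.erase_subset v)]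

end TJStep

namespace TJSeq

variable {G : SimpleGraph V} {ℓ : ℕ} {f : ℕ → Finset V}

theorem card_eq (h : TJSeq G ℓ f) : ∀ i ≤ ℓ, (f i).card = (f 0).card
  | 0, _ => rfl
  | i + 1, hi => by rw [(h.2 i hi).card_eq, card_eq h i (by omega)]

/-- The terms are `f m` at `2 m` and `f m ∩ f (m + 1)` at `2 m + 1`. -/
theorem tarSeq_interleave (h : TJSeq G ℓ f) :
    TARSeq G ((f 0).card - 1) (2 * ℓ) (fun j => f (j / 2) ∩ f ((j + 1) / 2)) := by
  constructor
  · intro j hj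
    obtain ⟨m, rfl | rfl⟩ := Nat.even_or_odd' j
    · have e₁ : 2 * m / 2 = m := by omega
      have e₂ : (2 * m + 1) / 2 = m := by omega
      simp only [e₁, e₂, Finset.inter_self]
      exact ⟨h.1 m (by omega), by rw [h.card_eq m (by omega)]; omega⟩
    · have e₁ : (2 * m + 1) / 2 = m := by omega
      have e₂ : (2 * m + 1 + 1) / 2 = m + 1 := by omega
      simp only [e₁, e₂]
      refine ⟨(h.1 m (by omega)).subset (by simp), ?_⟩
      rw [(h.2 m (by omega)).card_inter, h.card_eq m (by omega)]
  · intro j hj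
    obtain ⟨m, rfl | rfl⟩ := Nat.even_or_odd' j
    · have e₁ : 2 * m / 2 = m := by omega
      have e₂ : (2 * m + 1) / 2 = m := by omega
      have e₃ : (2 * m + 1 + 1) / 2 = m + 1 := by omega
      simp only [e₁, e₂, e₃, Finset.inter_self]
      exact (h.2 m (by omega)).tarStep_inter_left
    · have e₁ : (2 * m + 1) / 2 = m := by omega
      have e₂ : (2 * m + 1 + 1) / 2 = m + 1 := by omega
      have e₃ : (2 * m + 1 + 1 + 1) / 2 = m + 1 := by omega
      simp only [e₁, e₂, e₃, Finset.inter_self]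
      exact (h.2 m (by omega)).tarStep_inter_right

theorem tarReach (h : TJSeq G ℓ f) :
    TARReach G ((f 0).card - 1) (f 0) (f ℓ) (2 * ℓ) := by
  refine ⟨_, h.tarSeq_interleave, by simp, ?_⟩
  have e₁ : 2 * ℓ / 2 = ℓ := by omega
  have e₂ : (2 * ℓ + 1) / 2 = ℓ := by omega
  simp only [e₁, e₂, Finset.inter_self]

end TJSeq

namespace TJReach

variable {G : SimpleGraph V} {C S S' : Finset V} {t : ℕ}

theorem refl (hC : G.IsClique (C : Set V)) : TJReach G C C 0 :=
  ⟨fun _ => C, ⟨fun _ _ => hC, fun _ hi => absurd hi (Nat.not_lt_zero _)⟩, rfl, rfl⟩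

theorem snoc (h : TJReach G C S t) (hstep : TJStep S S') (hS' : G.IsClique (S' : Set V)) :
    TJReach G C S' (t + 1) := by
  obtain ⟨f, hf, rfl, rfl⟩ := h
  refine ⟨Function.update f (t + 1) S', ⟨fun i hi => ?_, fun i hi => ?_⟩, ?_, by simp⟩
  · rcases Nat.lt_or_eq_of_le hi with hi | rfl
    · rw [Function.update_of_ne (by omega)]
      exact hf.1 i (by omega)
    · rwa [Function.update_self]
  · rw [Function.update_of_ne (by omega)]
    rcases Nat.lt_succ_iff_lt_or_eq.mp hi with hi | rfl
    · rw [Function.update_of_ne (by omega)]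
      exact hf.2 i hi
    · rwa [Function.update_self]
  · exact Function.update_of_ne (by omega) _ _

end TJReach

/-- While a TAR(k-1)-sequence passes through `F` at time `i`, a `k`-clique comparable with `F` is
TJ-reachable from `C` in `t` steps, where `2 t + |(#F) - k| ≤ i`. -/
def TJTracks (G : SimpleGraph V) (C : Finset V) (k i : ℕ) (F : Finset V) : Prop :=
  ∃ S t, TJReach G C S t ∧ S.card = k ∧ (S ⊆ F ∨ F ⊆ S) ∧
    2 * t + F.card ≤ i + k ∧ 2 * t + k ≤ i + F.card

namespace TJTracks

variable {G : SimpleGraph V} {C F : Finset V} {k i : ℕ} {v : V}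

theorem add (h : TJTracks G C k i F) (hFk : k - 1 ≤ F.card) (hv : v ∉ F)
    (hF' : G.IsClique ((insert v F : Finset V) : Set V)) : TJTracks G C k (i + 1) (insert v F) := by
  obtain ⟨S, t, hreach, hSk, hSF, h₁, h₂⟩ := h
  have hcard : (insert v F).card = F.card + 1 := Finset.card_insert_of_notMem hv
  by_cases hFS : F ⊆ S ∧ ¬S ⊆ F
  · obtain ⟨x, hxS, hxF⟩ := Finset.not_subset.mp hFS.2
    by_cases hvS : v ∈ S
    · exact ⟨S, t, hreach, hSk, Or.inr (Finset.insert_subset hvS hFS.1), by omega, by omega⟩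
    -- `F` misses exactly the vertex `x` of `S`, so jumping from `x` to `v` lands on `insert v F`.
    have hFx : S.erase x = F := (Finset.eq_of_subset_of_card_le
      (fun y hy => Finset.mem_erase.mpr ⟨ne_of_mem_of_not_mem hy hxF, hFS.1 hy⟩)
      (by rw [Finset.card_erase_of_mem hxS]; omega)).symm
    have hstep : TJStep S (insert v F) := ⟨x, hxS, v, hvS, by rw [hFx]⟩
    have hFk' : F.card + 1 = k := by rw [← hFx, Finset.card_erase_add_one hxS, hSk]
    exact ⟨_, t + 1, hreach.snoc hstep hF', hstep.card_eq.trans hSk, Or.inr le_rfl,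
      by omega, by omega⟩
  · have hSF' : S ⊆ F := by tauto
    exact ⟨S, t, hreach, hSk, Or.inl (hSF'.trans (Finset.subset_insert v F)),
      by omega, by omega⟩

theorem remove (h : TJTracks G C k i F) (hF : G.IsClique (F : Set V)) (hv : v ∈ F) :
    TJTracks G C k (i + 1) (F.erase v) := by
  obtain ⟨S, t, hreach, hSk, hSF, h₁, h₂⟩ := h
  have hcard : (F.erase v).card + 1 = F.card := Finset.card_erase_add_one hv
  by_cases hFS : F ⊆ S
  · have := Finset.card_le_card hFS
    exact ⟨S, t, hreach, hSk, Or.inr ((F.erase_subset v).trans hFS), by omega, by omega⟩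
  have hSF : S ⊆ F := hSF.resolve_right hFS
  have hlt : S.card < F.card := Finset.card_lt_card ⟨hSF, hFS⟩
  by_cases hvS : v ∈ S
  · obtain ⟨y, hyF, hyS⟩ := Finset.not_subset.mp hFS
    have hsub : insert y (S.erase v) ⊆ F.erase v :=
      Finset.insert_subset (Finset.mem_erase.mpr ⟨(ne_of_mem_of_not_mem hvS hyS).symm, hyF⟩)
        (Finset.erase_subset_erase v hSF)
    have hstep : TJStep S (insert y (S.erase v)) := ⟨v, hvS, y, hyS, rfl⟩
    have hS' : G.IsClique ((insert y (S.erase v) : Finset V) : Set V) :=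
      hF.subset (by exact_mod_cast hsub.trans (F.erase_subset v))
    exact ⟨_, t + 1, hreach.snoc hstep hS',
      hstep.card_eq.trans hSk, Or.inl hsub, by omega, by omega⟩
  · exact ⟨S, t, hreach, hSk,
      Or.inl fun x hx => Finset.mem_erase.mpr ⟨ne_of_mem_of_not_mem hx hvS, hSF hx⟩,
      by omega, by omega⟩

theorem tarStep {F' : Finset V} (h : TJTracks G C k i F) (hF : G.IsClique (F : Set V))
    (hFk : k - 1 ≤ F.card) (hF' : G.IsClique (F' : Set V)) (hF'k : k - 1 ≤ F'.card)
    (hstep : TARStep F F') : TJTracks G C k (i + 1) F' := by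
  rcases hstep with ⟨v, hv, rfl⟩ | ⟨v, hv, rfl⟩
  · exact h.add hFk hv hF'
  · exact h.remove hF hv

end TJTracks

namespace TARSeq

variable {G : SimpleGraph V} {k ℓ : ℕ} {f : ℕ → Finset V}

theorem tjTracks (hf : TARSeq G (k - 1) ℓ f) (h0 : (f 0).card = k) :
    ∀ i ≤ ℓ, TJTracks G (f 0) k i (f i)
  | 0, _ => ⟨f 0, 0, TJReach.refl (hf.1 0 (Nat.zero_le _)).1, h0, Or.inl le_rfl,
      by omega, by omega⟩
  | i + 1, hi => (tjTracks hf h0 i (by omega)).tarStep (hf.1 i (by omega)).1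
      (hf.1 i (by omega)).2 (hf.1 (i + 1) hi).1 (hf.1 (i + 1) hi).2 (hf.2 i hi)

theorem exists_tjReach (hf : TARSeq G (k - 1) ℓ f) (h0 : (f 0).card = k)
    (hℓ : (f ℓ).card = k) : ∃ t, 2 * t ≤ ℓ ∧ TJReach G (f 0) (f ℓ) t := by
  obtain ⟨S, t, hreach, hSk, hSF, h₁, -⟩ := hf.tjTracks h0 ℓ le_rfl
  have hS : S = f ℓ := by
    rcases hSF with hSF | hFS
    · exact Finset.eq_of_subset_of_card_le hSF (by omega)
    · exact (Finset.eq_of_subset_of_card_le hFS (by omega)).symm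
  exact ⟨t, by omega, hS ▸ hreach⟩

end TARSeq

theorem stmt5 (G : SimpleGraph V) (C C' : Finset V) (k : ℕ)
    (hC : C.card = k) (hC' : C'.card = k) :
    ((∃ (ℓ : ℕ) (f : ℕ → Finset V), TJSeq G ℓ f ∧ f 0 = C ∧ f ℓ = C') ↔
      (∃ (ℓ : ℕ) (f : ℕ → Finset V), TARSeq G (k - 1) ℓ f ∧ f 0 = C ∧ f ℓ = C')) ∧
    (∀ dtj dtar : ℕ,
      IsLeast {ℓ | ∃ f : ℕ → Finset V, TJSeq G ℓ f ∧ f 0 = C ∧ f ℓ = C'} dtj →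
      IsLeast {ℓ | ∃ f : ℕ → Finset V, TARSeq G (k - 1) ℓ f ∧ f 0 = C ∧ f ℓ = C'} dtar →
      2 * dtj = dtar) := by
  have tj_to_tar : ∀ ℓ, TJReach G C C' ℓ → TARReach G (k - 1) C C' (2 * ℓ) := by
    rintro ℓ ⟨f, hf, rfl, rfl⟩
    exact hC ▸ hf.tarReach
  have tar_to_tj : ∀ ℓ, TARReach G (k - 1) C C' ℓ → ∃ t, 2 * t ≤ ℓ ∧ TJReach G C C' t := by
    rintro ℓ ⟨f, hf, rfl, rfl⟩
    exact hf.exists_tjReach hC hC'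
  refine ⟨⟨fun ⟨ℓ, hℓ⟩ => ⟨2 * ℓ, tj_to_tar ℓ hℓ⟩, fun ⟨ℓ, hℓ⟩ => ?_⟩, ?_⟩
  · obtain ⟨t, -, ht⟩ := tar_to_tj ℓ hℓ
    exact ⟨t, ht⟩
  · rintro dtj dtar ⟨htj, htj_min⟩ ⟨htar, htar_min⟩
    have h₁ : dtar ≤ 2 * dtj := htar_min (tj_to_tar dtj htj)
    obtain ⟨t, ht, hreach⟩ := tar_to_tj dtar htar
    have h₂ : dtj ≤ t := htj_min hreach
    omega
end

section
/- Let G be a simple graph, k a nonnegative integer, and let C_0, C_1, ..., C_ℓ be a TAR(k)-sequence of cliques in G. For each i choose a maximal clique M_i of G containing C_i, and let H be the graph on the vertex set of maximal cliques of G where two maximal cliques M, M' are adjacent when |M ∩ M'| ≥ k. Then M_0 and M_ℓ lie in the same connected component of H. -/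
variable {V : Type*} [DecidableEq V]

/-- A maximal clique of `G`. -/
def IsMaximalClique (G : SimpleGraph V) (M : Finset V) : Prop :=
  G.IsClique (M : Set V) ∧
    ∀ D : Finset V, G.IsClique (D : Set V) → M ⊆ D → M = D

/-- The `k`-intersection maximal-clique graph: vertices are the maximal cliques of `G`,
two distinct maximal cliques being adjacent when their intersection has at least `k` vertices. -/
def MCGraph (G : SimpleGraph V) (k : ℕ) :
    SimpleGraph {M : Finset V // IsMaximalClique G M} where
  Adj M M' := M ≠ M' ∧ k ≤ (M.1 ∩ M'.1).card
  symm := by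
    constructor; intro M M' h
    exact ⟨h.1.symm, by rw [Finset.inter_comm]; exact h.2⟩
  loopless := by constructor; intro M h; exact h.1 rfl

theorem SimpleGraph.reachable_of_forall_reachable_succ {W : Type*} {H : SimpleGraph W}
    {u : ℕ → W} {n : ℕ} (h : ∀ i < n, H.Reachable (u i) (u (i + 1))) :
    H.Reachable (u 0) (u n) := by
  induction n with
  | zero => rfl
  | succ n ih =>
    exact (ih fun i hi => h i (Nat.lt_succ_of_lt hi)).trans (h n n.lt_succ_self)

theorem TARStep.subset_or_subset {C C' : Finset V} (h : TARStep C C') : C ⊆ C' ∨ C' ⊆ C := by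
  rcases h with ⟨v, -, rfl⟩ | ⟨v, -, rfl⟩
  · exact .inl (Finset.subset_insert v C)
  · exact .inr (Finset.erase_subset v C)

theorem MCGraph.reachable_of_subset {G : SimpleGraph V} {k : ℕ} {C : Finset V}
    {M M' : {M : Finset V // IsMaximalClique G M}} (hk : k ≤ C.card) (hM : C ⊆ M.1)
    (hM' : C ⊆ M'.1) : (MCGraph G k).Reachable M M' := by
  by_cases hMM' : M = M'
  · exact hMM' ▸ .rfl
  · exact SimpleGraph.Adj.reachable
      ⟨hMM', hk.trans (Finset.card_le_card (Finset.subset_inter hM hM'))⟩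

theorem stmt9 (G : SimpleGraph V) (k ℓ : ℕ) (f : ℕ → Finset V)
    (hf : TARSeq G k ℓ f)
    (M : ℕ → {M : Finset V // IsMaximalClique G M})
    (hM : ∀ i ≤ ℓ, f i ⊆ (M i).1) :
    (MCGraph G k).Reachable (M 0) (M ℓ) := by
  obtain ⟨hclique, hstep⟩ := hf
  refine SimpleGraph.reachable_of_forall_reachable_succ fun i hi => ?_
  rcases (hstep i hi).subset_or_subset with hsub | hsub
  · exact MCGraph.reachable_of_subset (hclique i hi.le).2 (hM i hi.le) (hsub.trans (hM _ hi))
  · exact MCGraph.reachable_of_subset (hclique _ hi).2 (hsub.trans (hM i hi.le)) (hM _ hi)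
end

section
/- Let C_0, C_1, ..., C_ℓ be a TAR(k)-sequence of cliques in a simple graph G, and let S be a (C_0, C_ℓ)-separator of G, i.e. a vertex set such that every path in G from a vertex of C_0 \ S to a vertex of C_ℓ \ S meets S (removing S disconnects every vertex of C_0 \ S from every vertex of C_ℓ \ S). If C_ℓ \ S is nonempty, then some clique C_j in the sequence satisfies C_j ⊆ S. -/
variable {V : Type*} [DecidableEq V]

lemma clique_reach {G : SimpleGraph V} {S : Set V} {C : Set V} (hC : G.IsClique C)
    {x y : V} (hx : x ∈ C) (hy : y ∈ C) (hxS : x ∉ S) (hyS : y ∉ S) :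
    (G.induce Sᶜ).Reachable ⟨x, hxS⟩ ⟨y, hyS⟩ := by
  by_cases h : x = y
  · subst h; rfl
  · exact SimpleGraph.Adj.reachable (by exact hC hx hy h)

theorem stmt11 (G : SimpleGraph V) (k ℓ : ℕ) (f : ℕ → Finset V)
    (hf : TARSeq G k ℓ f) (S : Set V)
    (hsep : ∀ (x y : V) (hx : x ∈ (↑(f 0) : Set V) \ S) (hy : y ∈ (↑(f ℓ) : Set V) \ S),
      ¬ (G.induce Sᶜ).Reachable ⟨x, hx.2⟩ ⟨y, hy.2⟩)
    (hne : ((↑(f ℓ) : Set V) \ S).Nonempty) :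
    ∃ j ≤ ℓ, (↑(f j) : Set V) ⊆ S := by
  by_contra hcon
  push_neg at hcon
  -- every f j \ S is nonempty for j ≤ ℓ
  have hnex : ∀ j ≤ ℓ, ∃ z, z ∈ f j ∧ z ∉ S := by
    intro j hj
    obtain ⟨z, hz, hzS⟩ := Set.not_subset.1 (hcon j hj)
    exact ⟨z, by simpa using hz, hzS⟩
  have key : ∀ i ≤ ℓ, ∀ x (hx : x ∈ f 0) (hxS : x ∉ S) y (hy : y ∈ f i) (hyS : y ∉ S),
      (G.induce Sᶜ).Reachable ⟨x, hxS⟩ ⟨y, hyS⟩ := by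
    intro i
    induction i with
    | zero =>
      intro _ x hx hxS y hy hyS
      exact clique_reach (hf.1 0 (Nat.zero_le _)).1 hx hy hxS hyS
    | succ n ih =>
      intro hn x hx hxS y hy hyS
      have hn' : n ≤ ℓ := Nat.le_of_succ_le hn
      -- find z in f n ∩ f (n+1) outside S
      have step := hf.2 n hn
      obtain ⟨z, hz1, hz2, hzS⟩ : ∃ z, z ∈ f n ∧ z ∈ f (n+1) ∧ z ∉ S := by
        rcases step with ⟨v, hv, hins⟩ | ⟨v, hv, hers⟩
        · obtain ⟨z, hz, hzS⟩ := hnex n hn'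
          exact ⟨z, hz, by rw [hins]; exact Finset.mem_insert_of_mem hz, hzS⟩
        · obtain ⟨z, hz, hzS⟩ := hnex (n+1) hn
          exact ⟨z, by rw [hers] at hz; exact Finset.mem_of_mem_erase hz, hz, hzS⟩
      exact (ih hn' x hx hxS z hz1 hzS).trans
        (clique_reach (hf.1 (n+1) hn).1 hz2 hy hzS hyS)
  obtain ⟨y, hy, hyS⟩ := hnex ℓ le_rfl
  obtain ⟨x, hx, hxS⟩ := hnex 0 (Nat.zero_le _)
  exact hsep x y ⟨hx, hxS⟩ ⟨hy, hyS⟩ (key ℓ le_rfl x hx hxS y hy hyS)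
end

section
/- Let G be an interval graph with clique path M_0, M_1, ..., M_t (t ≥ 1), and let C_s ⊆ M_0, C_t ⊆ M_t be cliques with C_s ⊄ M_1, C_s ⊄ C_t, and |C_s| ≥ k+1. Let u be a vertex of C_s \ C_t with the minimum r-value, where r_v = max{i : v ∈ M_i}. Then the minimum length of a TAR(k)-sequence from C_s to C_t equals one plus the minimum length of a TAR(k)-sequence from C_s \ {u} to C_t. -/
variable {V : Type*} [DecidableEq V]

/-!
Since `u` has r-value 0, every clique containing `u` lies in `M 0`. In a TAR(k)-sequence from
`C_s` to `C_t`, consider a step deleting `u`: everything before it lives in the clique `M 0`, and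
the length of that prefix bounds the symmetric difference between `C_s \ {u}` and the clique just
after the deletion. Inside a clique, two subcliques of size at least `k` are joined by a sequence
whose length is their symmetric difference (first add the missing vertices, then delete the extra
ones), so from `C_s \ {u}` one saves at least one step. Conversely, deleting `u` first turns a
sequence from `C_s \ {u}` into one from `C_s`.
-/

open Finset
open scoped symmDiff

def TARPath (G : SimpleGraph V) (k ℓ : ℕ) (A B : Finset V) : Prop :=
  ∃ f : ℕ → Finset V, TARSeq G k ℓ f ∧ f 0 = A ∧ f ℓ = B

theorem TARStep.symm {A B : Finset V} (h : TARStep A B) : TARStep B A := by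
  rcases h with ⟨v, hv, rfl⟩ | ⟨v, hv, rfl⟩
  · exact Or.inr ⟨v, mem_insert_self v A, (erase_insert hv).symm⟩
  · exact Or.inl ⟨v, notMem_erase v A, (insert_erase hv).symm⟩

theorem TARStep.card_symmDiff {A B : Finset V} (h : TARStep A B) : #(A ∆ B) = 1 := by
  rcases h with ⟨v, hv, rfl⟩ | ⟨v, hv, rfl⟩
  · rw [symmDiff_of_le (subset_insert v A), card_sdiff_of_subset (subset_insert v A),
      card_insert_of_notMem hv, Nat.add_sub_cancel_left]
  · rw [symmDiff_of_ge (erase_subset v A), card_sdiff_of_subset (erase_subset v A),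
      card_erase_of_mem hv]
    have := card_pos.2 ⟨v, hv⟩
    omega

theorem Finset.erase_symmDiff_erase_subset (A B : Finset V) (u : V) :
    A.erase u ∆ B.erase u ⊆ A ∆ B := by
  intro x
  simp only [mem_symmDiff, mem_erase]
  tauto

section TARSequences

variable {G : SimpleGraph V} {k : ℕ}

theorem TARSeq.card_symmDiff_le {ℓ : ℕ} {f : ℕ → Finset V} (hf : TARSeq G k ℓ f) :
    ∀ {j}, j ≤ ℓ → #(f 0 ∆ f j) ≤ j
  | 0, _ => by simp
  | j + 1, hj =>
    calc #(f 0 ∆ f (j + 1)) ≤ #(f 0 ∆ f j ∪ f j ∆ f (j + 1)) :=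
          card_le_card (symmDiff_triangle _ _ _)
      _ ≤ #(f 0 ∆ f j) + #(f j ∆ f (j + 1)) := card_union_le _ _
      _ ≤ j + 1 := by
          rw [(hf.2 j hj).card_symmDiff]
          exact Nat.add_le_add_right (hf.card_symmDiff_le (by omega)) 1

theorem TARSeq.exists_mem_notMem_succ {ℓ : ℕ} {f : ℕ → Finset V} {u : V}
    (hf : TARSeq G k ℓ f) (h0 : u ∈ f 0) (hℓ : u ∉ f ℓ) :
    ∃ j < ℓ, u ∈ f j ∧ f (j + 1) = (f j).erase u := by
  by_contra! hno
  have hmem : ∀ j ≤ ℓ, u ∈ f j := by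
    intro j hj
    induction j with
    | zero => exact h0
    | succ j ih =>
      have hu := ih (by omega)
      rcases hf.2 j (by omega) with ⟨v, -, he⟩ | ⟨v, -, he⟩
      · exact he ▸ mem_insert_of_mem hu
      · by_cases hvu : v = u
        · exact absurd (hvu ▸ he) (hno j (by omega) hu)
        · exact he ▸ mem_erase.2 ⟨Ne.symm hvu, hu⟩
  exact hℓ (hmem ℓ le_rfl)

theorem TARPath.refl {A : Finset V} (hA : G.IsClique (A : Set V)) (hk : k ≤ #A) :
    TARPath G k 0 A A :=
  ⟨fun _ => A, ⟨fun _ _ => ⟨hA, hk⟩, fun _ h => absurd h (Nat.not_lt_zero _)⟩, rfl, rfl⟩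

theorem TARPath.single {A B : Finset V} (hA : G.IsClique (A : Set V)) (hkA : k ≤ #A)
    (hB : G.IsClique (B : Set V)) (hkB : k ≤ #B) (h : TARStep A B) : TARPath G k 1 A B := by
  refine ⟨fun i => if i = 0 then A else B, ⟨fun i _ => ?_, fun i hi => ?_⟩, rfl, rfl⟩
  · dsimp only
    split_ifs
    exacts [⟨hA, hkA⟩, ⟨hB, hkB⟩]
  · obtain rfl : i = 0 := by omega
    exact h

theorem TARPath.trans {m n : ℕ} {A B C : Finset V} (hAB : TARPath G k m A B)
    (hBC : TARPath G k n B C) : TARPath G k (m + n) A C := by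
  obtain ⟨f, hf, rfl, rfl⟩ := hAB
  obtain ⟨g, hg, hfg, rfl⟩ := hBC
  refine ⟨fun i => if i ≤ m then f i else g (i - m), ⟨fun i hi => ?_, fun i hi => ?_⟩,
    by simp, ?_⟩
  · dsimp only
    split_ifs with h
    exacts [hf.1 i h, hg.1 (i - m) (by omega)]
  · rcases lt_trichotomy i m with h | rfl | h
    · simpa [h.le, Nat.succ_le_of_lt h] using hf.2 i h
    · simpa [hfg] using hg.2 0 (by omega)
    · simp only [if_neg (by omega : ¬ i ≤ m), if_neg (by omega : ¬ i + 1 ≤ m),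
        Nat.sub_add_comm h.le]
      exact hg.2 (i - m) (by omega)
  · rcases Nat.eq_zero_or_pos n with rfl | hn
    · simp [hfg]
    · simp only [if_neg (by omega : ¬ m + n ≤ m), Nat.add_sub_cancel_left]

theorem TARPath.symm {ℓ : ℕ} {A B : Finset V} (h : TARPath G k ℓ A B) : TARPath G k ℓ B A := by
  obtain ⟨f, hf, rfl, rfl⟩ := h
  refine ⟨fun i => f (ℓ - i), ⟨fun i _ => hf.1 _ (Nat.sub_le ℓ i), fun i hi => ?_⟩, by simp,
    by simp⟩
  have hstep := (hf.2 (ℓ - (i + 1)) (by omega)).symm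
  rwa [show ℓ - (i + 1) + 1 = ℓ - i by omega] at hstep

theorem TARSeq.tarPath_drop {ℓ : ℕ} {f : ℕ → Finset V} (hf : TARSeq G k ℓ f) {j : ℕ} (hj : j ≤ ℓ) :
    TARPath G k (ℓ - j) (f j) (f ℓ) :=
  ⟨fun i => f (j + i), ⟨fun i hi => hf.1 (j + i) (by omega), fun i hi => hf.2 (j + i) (by omega)⟩,
    rfl, congrArg f (Nat.add_sub_cancel' hj)⟩

theorem TARPath.union_of_disjoint {A D : Finset V} (hk : k ≤ #A) (hdisj : Disjoint A D)
    (hclique : G.IsClique ((A ∪ D : Finset V) : Set V)) : TARPath G k #D A (A ∪ D) := by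
  induction D using Finset.induction_on with
  | empty => simpa using TARPath.refl (by simpa using hclique) hk
  | insert v D hvD ih =>
    rw [disjoint_insert_right] at hdisj
    rw [union_insert] at hclique ⊢
    have hsub : ((A ∪ D : Finset V) : Set V) ⊆ (insert v (A ∪ D) : Finset V) :=
      coe_subset.2 (subset_insert v (A ∪ D))
    have hkAD : k ≤ #(A ∪ D) := hk.trans (card_le_card subset_union_left)
    rw [card_insert_of_notMem hvD]
    refine (ih hdisj.2 (hclique.subset hsub)).trans
      (.single (hclique.subset hsub) hkAD hclique (hkAD.trans (card_le_card (subset_insert _ _)))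
        (Or.inl ⟨v, ?_, rfl⟩))
    simp [hdisj.1, hvD]

theorem TARPath.of_subset {A B : Finset V} (hB : G.IsClique (B : Set V)) (hAB : A ⊆ B)
    (hk : k ≤ #A) : TARPath G k #(B \ A) A B := by
  have hB' : G.IsClique ((A ∪ B \ A : Finset V) : Set V) := by rwa [union_sdiff_of_subset hAB]
  simpa only [union_sdiff_of_subset hAB] using TARPath.union_of_disjoint hk disjoint_sdiff hB'

theorem TARPath.of_subset_isClique {K A B : Finset V} (hK : G.IsClique (K : Set V))
    (hA : A ⊆ K) (hB : B ⊆ K) (hkA : k ≤ #A) (hkB : k ≤ #B) : TARPath G k #(A ∆ B) A B := by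
  have hAB : G.IsClique ((A ∪ B : Finset V) : Set V) :=
    hK.subset (coe_subset.2 (union_subset hA hB))
  have hcard : #(A ∆ B) = #((A ∪ B) \ A) + #((A ∪ B) \ B) := by
    rw [union_sdiff_left, union_sdiff_right, symmDiff_def, sup_eq_union,
      card_union_of_disjoint disjoint_sdiff_sdiff, add_comm]
  rw [hcard]
  exact (TARPath.of_subset hAB subset_union_left hkA).trans
    (TARPath.of_subset hAB subset_union_right hkB).symm

theorem TARPath.exists_erase_of_forall_isClique_subset {ℓ : ℕ} {K A B : Finset V} {u : V}
    (hK : G.IsClique (K : Set V)) (hsub : ∀ C : Finset V, G.IsClique (C : Set V) → u ∈ C → C ⊆ K)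
    (hu : u ∈ A) (huB : u ∉ B) (hA : k + 1 ≤ #A) (h : TARPath G k ℓ A B) :
    ∃ ℓ', ℓ' + 1 ≤ ℓ ∧ TARPath G k ℓ' (A.erase u) B := by
  obtain ⟨f, hf, rfl, rfl⟩ := h
  obtain ⟨j, hjℓ, huj, hfj⟩ := hf.exists_mem_notMem_succ hu huB
  have hfjK : f j ⊆ K := hsub _ (hf.1 j hjℓ.le).1 huj
  have hdist : #((f 0).erase u ∆ f (j + 1)) ≤ j := by
    rw [hfj]
    exact (card_le_card (erase_symmDiff_erase_subset _ _ u)).trans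
      (hf.card_symmDiff_le hjℓ.le)
  have hhead : TARPath G k #((f 0).erase u ∆ f (j + 1)) ((f 0).erase u) (f (j + 1)) :=
    .of_subset_isClique hK ((erase_subset u _).trans (hsub _ (hf.1 0 (Nat.zero_le ℓ)).1 hu))
      (hfj ▸ (erase_subset u _).trans hfjK) (by rw [card_erase_of_mem hu]; omega)
      (hf.1 (j + 1) hjℓ).2
  exact ⟨_, by omega, hhead.trans (TARSeq.tarPath_drop hf hjℓ)⟩

end TARSequences

theorem exists_isLeast_and_isLeast_succ {S T : Set ℕ} (hT : T.Nonempty)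
    (hST : ∀ n ∈ S, n + 1 ∈ T) (hTS : ∀ n ∈ T, ∃ m ∈ S, m + 1 ≤ n) :
    ∃ d, IsLeast S d ∧ IsLeast T (d + 1) := by
  obtain ⟨n, hn⟩ := hT
  obtain ⟨m, hm, -⟩ := hTS n hn
  have hS : IsLeast S (sInf S) := ⟨Nat.sInf_mem ⟨m, hm⟩, fun _ => Nat.sInf_le⟩
  refine ⟨sInf S, hS, hST _ hS.1, fun n hn => ?_⟩
  obtain ⟨m, hm, hmn⟩ := hTS n hn
  exact (Nat.add_le_add_right (hS.2 hm) 1).trans hmn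

theorem exists_isLeast_tarPath_erase {G : SimpleGraph V} {k : ℕ} {K A B : Finset V} {u : V}
    (hK : G.IsClique (K : Set V)) (hsub : ∀ C : Finset V, G.IsClique (C : Set V) → u ∈ C → C ⊆ K)
    (hu : u ∈ A) (huB : u ∉ B) (hA : k + 1 ≤ #A) (hex : ∃ ℓ, TARPath G k ℓ A B) :
    ∃ d, IsLeast {ℓ | TARPath G k ℓ (A.erase u) B} d ∧ IsLeast {ℓ | TARPath G k ℓ A B} (d + 1) := by
  obtain ⟨ℓ, f, hf, rfl, hfℓ⟩ := hex
  have hAK : f 0 ⊆ K := hsub _ (hf.1 0 (Nat.zero_le ℓ)).1 hu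
  refine exists_isLeast_and_isLeast_succ ⟨ℓ, f, hf, rfl, hfℓ⟩ (fun n hn => ?_)
    (fun n hn => ?_)
  · rw [add_comm]
    exact TARPath.trans (.single (hK.subset (coe_subset.2 hAK)) (by omega)
      (hK.subset (coe_subset.2 ((erase_subset u _).trans hAK)))
      (by rw [card_erase_of_mem hu]; omega) (Or.inr ⟨u, hu, rfl⟩)) hn
  · obtain ⟨m, hmn, hm⟩ := TARPath.exists_erase_of_forall_isClique_subset hK hsub hu huB hA hn
    exact ⟨m, hm, hmn⟩

theorem exists_isMaximalClique_superset {α : Type*} [Finite α] {G : SimpleGraph α} {C : Finset α}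
    (hC : G.IsClique (C : Set α)) : ∃ D, IsMaximalClique G D ∧ C ⊆ D := by
  obtain ⟨D, hCD, hD⟩ :=
    (Set.toFinite {D : Finset α | G.IsClique (D : Set α)}).exists_le_maximal (a := C) hC
  exact ⟨D, ⟨hD.prop, fun D' hD' hDD' => hD.eq_of_le hD' hDD'⟩, hCD⟩

theorem stmt16_general (G : SimpleGraph V) (k t : ℕ) (ht : 1 ≤ t)
    (M : ℕ → Finset V)
    -- `M 0, …, M t` is a clique path of the interval graph `G`:
    (hmax : ∀ i ≤ t, IsMaximalClique G (M i))
    (hall : ∀ D : Finset V, IsMaximalClique G D → ∃ i ≤ t, D = M i)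
    (hinterval : ∀ v : V, ∀ i j l, i ≤ j → j ≤ l → l ≤ t →
      v ∈ M i → v ∈ M l → v ∈ M j)
    (hvert : ∀ v : V, ∃ i ≤ t, v ∈ M i)
    -- `r v` is the r-value of `v`: the largest index `i ≤ t` with `v ∈ M i`
    (r : V → ℕ)
    (hr : ∀ v : V, r v ≤ t ∧ v ∈ M (r v) ∧ ∀ i ≤ t, v ∈ M i → i ≤ r v)
    (Cstart Cend : Finset V)
    (hCs : Cstart ⊆ M 0) (hCe : Cend ⊆ M t)
    (hCsM1 : ¬ Cstart ⊆ M 1)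
    (hcard : k + 1 ≤ Cstart.card)
    (u : V) (hu : u ∈ Cstart) (hu' : u ∉ Cend)
    (humin : ∀ w ∈ Cstart, w ∉ Cend → r u ≤ r w)
    (hex : ∃ (ℓ : ℕ) (f : ℕ → Finset V), TARSeq G k ℓ f ∧ f 0 = Cstart ∧ f ℓ = Cend) :
    ∃ d : ℕ,
      IsLeast {ℓ | ∃ f : ℕ → Finset V,
        TARSeq G k ℓ f ∧ f 0 = Cstart.erase u ∧ f ℓ = Cend} d ∧
      IsLeast {ℓ | ∃ f : ℕ → Finset V,
        TARSeq G k ℓ f ∧ f 0 = Cstart ∧ f ℓ = Cend} (d + 1) := by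
  have : Finite V := Set.finite_univ_iff.1 <|
    ((range (t + 1)).biUnion M).finite_toSet.subset fun v _ => by
      obtain ⟨i, hi, hv⟩ := hvert v
      simpa using ⟨i, by omega, hv⟩
  -- a vertex of `Cstart` outside `M 1` has r-value 0 and is not in `Cend`
  have hru : r u = 0 := by
    obtain ⟨x, hx, hx1⟩ := not_subset.1 hCsM1
    have hrx : r x = 0 := by
      by_contra h
      exact hx1 (hinterval x 0 1 (r x) (by omega) (by omega) (hr x).1 (hCs hx) (hr x).2.1)
    have hxe : x ∉ Cend := fun hxe =>
      hx1 (hinterval x 0 1 t (by omega) ht le_rfl (hCs hx) (hCe hxe))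
    exact Nat.eq_zero_of_le_zero (hrx ▸ humin x hx hxe)
  have hsub : ∀ C : Finset V, G.IsClique (C : Set V) → u ∈ C → C ⊆ M 0 := by
    intro C hC huC
    obtain ⟨D, hD, hCD⟩ := exists_isMaximalClique_superset hC
    obtain ⟨i, hi, rfl⟩ := hall D hD
    obtain rfl : i = 0 := by have := (hr u).2.2 i hi (hCD huC); omega
    exact hCD
  exact exists_isLeast_tarPath_erase (hmax 0 (Nat.zero_le t)).1 hsub hu hu' hcard hex

theorem stmt16 (G : SimpleGraph V) (k t : ℕ) (ht : 1 ≤ t)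
    (M : ℕ → Finset V)
    -- `M 0, …, M t` is a clique path of the interval graph `G`:
    (hmax : ∀ i ≤ t, IsMaximalClique G (M i))
    (hall : ∀ D : Finset V, IsMaximalClique G D → ∃ i ≤ t, D = M i)
    (hinj : ∀ i ≤ t, ∀ j ≤ t, M i = M j → i = j)
    (hinterval : ∀ v : V, ∀ i j l, i ≤ j → j ≤ l → l ≤ t →
      v ∈ M i → v ∈ M l → v ∈ M j)
    (hvert : ∀ v : V, ∃ i ≤ t, v ∈ M i)
    -- `r v` is the r-value of `v`: the largest index `i ≤ t` with `v ∈ M i`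
    (r : V → ℕ)
    (hr : ∀ v : V, r v ≤ t ∧ v ∈ M (r v) ∧ ∀ i ≤ t, v ∈ M i → i ≤ r v)
    (Cstart Cend : Finset V)
    (hCs : Cstart ⊆ M 0) (hCe : Cend ⊆ M t)
    (hCsM1 : ¬ Cstart ⊆ M 1) (hCsCe : ¬ Cstart ⊆ Cend)
    (hcard : k + 1 ≤ Cstart.card)
    (u : V) (hu : u ∈ Cstart) (hu' : u ∉ Cend)
    (humin : ∀ w ∈ Cstart, w ∉ Cend → r u ≤ r w)
    (hex : ∃ (ℓ : ℕ) (f : ℕ → Finset V), TARSeq G k ℓ f ∧ f 0 = Cstart ∧ f ℓ = Cend) :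
    ∃ d : ℕ,
      IsLeast {ℓ | ∃ f : ℕ → Finset V,
        TARSeq G k ℓ f ∧ f 0 = Cstart.erase u ∧ f ℓ = Cend} d ∧
      IsLeast {ℓ | ∃ f : ℕ → Finset V,
        TARSeq G k ℓ f ∧ f 0 = Cstart ∧ f ℓ = Cend} (d + 1) :=
  stmt16_general G k t ht M hmax hall hinterval hvert r hr Cstart Cend hCs hCe hCsM1 hcard u hu hu'
    humin hex
end
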